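/- Let $H_A$, $H_B$ be finitely generated free $\mathbb{Z}$-modules, $\Phi : H_A \otimes \widehat{\mathbb{Z}} \to H_B \otimes \widehat{\mathbb{Z}}$ a $\widehat{\mathbb{Z}}$-linear map, and $L_A \subseteq H_A$, $L_B \subseteq H_B$ finite-index $\mathbb{Z}$-submodules with $\Phi(L_A \otimes \widehat{\mathbb{Z}}) \subseteq L_B \otimes \widehat{\mathbb{Z}}$. Then the matrix coefficient module $\mathrm{MC}(\Phi; L_A, L_B)$ of the restricted map is commensurable with $\mathrm{MC}(\Phi; H_A, H_B)$ as $\mathbb{Z}$-submodules of $\widehat{\mathbb{Z}}$; in particular the two modules have equal $\mathbb{Z}$-rank. -/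

import Mathlib

/-- Compatibility condition defining the profinite integers as the inverse limit
of the rings `ZMod (n+1)` under the reduction maps. -/
def ZHatCompat (f : ∀ n : ℕ, ZMod (n + 1)) : Prop :=
  ∀ (m n : ℕ) (h : (m + 1) ∣ (n + 1)), ZMod.castHom h (ZMod (m + 1)) (f n) = f m

/-- The ring of profinite integers `ẑ`, realized as a subring of `∏ₙ ZMod (n+1)`. -/
def ZHat : Subring (∀ n : ℕ, ZMod (n + 1)) where
  carrier := {f | ZHatCompat f}
  zero_mem' := by intro m n h; simp only [Pi.zero_apply, map_zero]
  one_mem' := by intro m n h; simp only [Pi.one_apply, map_one]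
  add_mem' := by
    intro a b ha hb m n h
    have ha' := (ha : ZHatCompat a) m n h
    have hb' := (hb : ZHatCompat b) m n h
    simp only [Pi.add_apply, map_add, ha', hb']
  mul_mem' := by
    intro a b ha hb m n h
    have ha' := (ha : ZHatCompat a) m n h
    have hb' := (hb : ZHatCompat b) m n h
    simp only [Pi.mul_apply, map_mul, ha', hb']
  neg_mem' := by
    intro a ha m n h
    have ha' := (ha : ZHatCompat a) m n h
    simp only [Pi.neg_apply, map_neg, ha']


/-!
If `a ≠ 0` kills `H_A / L_A`, then `a • Φ (1 ⊗ u) = Φ (1 ⊗ a • u)` has its coordinates in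
`MC(Φ; L_A, L_B)`, and reading coordinates in a basis of `H_B` gives
`a • MC(Φ; H_A, H_B) ⊆ MC(Φ; L_A, L_B)`. Conversely, if `b ≠ 0` kills `H_B / L_B`, there is
`w : H_B → L_B` with `w ∘ ι = b` for the inclusion `ι`, and applying `w` to `Φ (1 ⊗ ι k)`
gives `b • MC(Φ; L_A, L_B) ⊆ MC(Φ; H_A, H_B)`, now reading coordinates in a basis of the free
module `L_B`. As `ẑ` is torsion-free, multiplication by a nonzero integer is injective, so the
two modules have the same rank.
-/

theorem ZMod.castHom_eq_zero_of_nsmul_eq_zero {m N n : ℕ} (hn : n ≠ 0) (hN : N = n * m)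
    (h : m ∣ N) {v : ZMod N} (hv : n • v = 0) : ZMod.castHom h (ZMod m) v = 0 := by
  subst hN
  have hdvd : ((n * m : ℕ) : ℤ) ∣ n * (v.cast : ℤ) := by
    rw [← ZMod.intCast_zmod_eq_zero_iff_dvd]
    simpa [nsmul_eq_mul] using hv
  push_cast at hdvd
  rw [← ZMod.intCast_zmod_cast v, map_intCast, ZMod.intCast_zmod_eq_zero_iff_dvd]
  exact (mul_dvd_mul_iff_left (by exact_mod_cast hn)).mp hdvd

theorem ZHat.eq_zero_of_nsmul_eq_zero {n : ℕ} (hn : n ≠ 0) {x : ZHat} (hx : n • x = 0) :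
    x = 0 := by
  refine Subtype.ext (funext fun m => ?_)
  -- The component at level `m + 1` is the reduction of the one at level `n * (m + 1)`.
  obtain ⟨j, hj⟩ : ∃ j, j + 1 = n * (m + 1) :=
    ⟨_, Nat.sub_add_cancel (Nat.one_le_iff_ne_zero.mpr (by positivity))⟩
  have hdvd : m + 1 ∣ j + 1 := hj ▸ dvd_mul_left _ _
  rw [← x.2 m j hdvd]
  exact ZMod.castHom_eq_zero_of_nsmul_eq_zero hn hj hdvd (congrFun (congrArg Subtype.val hx) j)

instance : IsAddTorsionFree ZHat where
  nsmul_right_injective _ hn x y hxy :=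
    sub_eq_zero.mp <| ZHat.eq_zero_of_nsmul_eq_zero hn <| by rwa [nsmul_sub, sub_eq_zero]

section Coefficients

open TensorProduct

variable {R A P Q : Type*} [CommSemiring R] [Semiring A] [Algebra R A]
  [AddCommMonoid P] [Module R P] [AddCommMonoid Q] [Module R Q]

theorem TensorProduct.mem_range_map_subtype_iff_basis_repr_mem {ι : Type*}
    (b : Module.Basis ι R Q) (L : Submodule R A) (x : A ⊗[R] Q) :
    x ∈ LinearMap.range (map L.subtype (LinearMap.id : Q →ₗ[R] Q)) ↔
      ∀ i, (Algebra.TensorProduct.basis A b).repr x i ∈ L := by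
  constructor
  · rintro ⟨y, rfl⟩ i
    induction y using TensorProduct.induction_on with
    | zero => simp
    | tmul l q =>
      simp only [map_tmul, Submodule.coe_subtype, LinearMap.id_apply,
        Algebra.TensorProduct.basis_repr_tmul, Finsupp.smul_apply, Finsupp.mapRange_apply,
        smul_eq_mul, ← Algebra.commutes]
      rw [← _root_.Algebra.smul_def]
      exact L.smul_mem _ l.2
    | add y z hy hz => simpa only [map_add, Finsupp.add_apply] using L.add_mem hy hz
  · intro h
    rw [← (Algebra.TensorProduct.basis A b).linearCombination_repr x,
      Finsupp.linearCombination_apply]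
    refine Submodule.finsuppSum_mem _ _ _ _ fun i _ => ⟨⟨_, h i⟩ ⊗ₜ b i, ?_⟩
    simp [smul_tmul']

theorem TensorProduct.mem_range_map_comap_smul_of_smul_mem [Module.Free R Q]
    {L : Submodule R A} {a : R} {x : A ⊗[R] Q}
    (h : a • x ∈ LinearMap.range (map L.subtype (LinearMap.id : Q →ₗ[R] Q))) :
    x ∈ LinearMap.range
      (map (L.comap (a • LinearMap.id)).subtype (LinearMap.id : Q →ₗ[R] Q)) := by
  set b := Module.Free.chooseBasis R Q
  rw [mem_range_map_subtype_iff_basis_repr_mem b] at h ⊢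
  intro i
  rw [LinearMapClass.map_smul_of_tower (Algebra.TensorProduct.basis A b).repr a x] at h
  simpa using h i

theorem LinearMap.baseChange_mem_range_map_subtype (f : P →ₗ[R] Q) {L : Submodule R A}
    {x : A ⊗[R] P} (h : x ∈ LinearMap.range (map L.subtype (LinearMap.id : P →ₗ[R] P))) :
    f.baseChange A x ∈ LinearMap.range (map L.subtype (LinearMap.id : Q →ₗ[R] Q)) := by
  obtain ⟨z, rfl⟩ := h
  refine ⟨map LinearMap.id f z, ?_⟩
  induction z using TensorProduct.induction_on with
  | zero => simp
  | tmul l p => simp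
  | add y z hy hz => simp only [map_add, hy, hz]

def HasMatrixCoeffsIn (Φ : A ⊗[R] P →ₗ[A] A ⊗[R] Q) (L : Submodule R A) : Prop :=
  ∀ u : P, Φ (1 ⊗ₜ u) ∈ LinearMap.range (map L.subtype (LinearMap.id : Q →ₗ[R] Q))

variable {KP KQ : Type*} [AddCommMonoid KP] [Module R KP] [AddCommMonoid KQ] [Module R KQ]
  {Φ : A ⊗[R] P →ₗ[A] A ⊗[R] Q} {Φ' : A ⊗[R] KP →ₗ[A] A ⊗[R] KQ} {iP : KP →ₗ[R] P}
  {iQ : KQ →ₗ[R] Q} {L : Submodule R A} {a : R}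

theorem HasMatrixCoeffsIn.comap_smul_of_restrict [Module.Free R Q]
    (hrestr : (iQ.baseChange A).comp Φ' = Φ.comp (iP.baseChange A))
    (ha : ∀ u, a • u ∈ LinearMap.range iP) (h : HasMatrixCoeffsIn Φ' L) :
    HasMatrixCoeffsIn Φ (L.comap (a • LinearMap.id)) := by
  intro u
  obtain ⟨k, hk⟩ := ha u
  have hΦ : a • Φ (1 ⊗ₜ u) = iQ.baseChange A (Φ' (1 ⊗ₜ k)) := by
    rw [← LinearMap.comp_apply, hrestr, LinearMap.comp_apply, LinearMap.baseChange_tmul, hk,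
      tmul_smul, LinearMap.map_smul_of_tower]
  apply mem_range_map_comap_smul_of_smul_mem
  rw [hΦ]
  exact iQ.baseChange_mem_range_map_subtype (h k)

theorem HasMatrixCoeffsIn.restrict_comap_smul [Module.Free R KQ]
    (hrestr : (iQ.baseChange A).comp Φ' = Φ.comp (iP.baseChange A)) {w : Q →ₗ[R] KQ}
    (hw : w ∘ₗ iQ = a • LinearMap.id) (h : HasMatrixCoeffsIn Φ L) :
    HasMatrixCoeffsIn Φ' (L.comap (a • LinearMap.id)) := by
  intro k
  have hΦ' : a • Φ' (1 ⊗ₜ k) = w.baseChange A (Φ (1 ⊗ₜ iP k)) := by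
    rw [← iP.baseChange_tmul, ← LinearMap.comp_apply Φ, ← hrestr, LinearMap.comp_apply,
      ← LinearMap.comp_apply (w.baseChange A), ← LinearMap.baseChange_comp, hw,
      LinearMap.baseChange_smul, LinearMap.baseChange_id, LinearMap.smul_apply, LinearMap.id_apply]
  apply mem_range_map_comap_smul_of_smul_mem
  rw [hΦ']
  exact w.baseChange_mem_range_map_subtype (h (iP k))

end Coefficients

theorem Submodule.rank_le_of_le_comap_smul {R M : Type*} [CommRing R] [IsCancelMulZero R]
    [AddCommGroup M] [Module R M] [Module.IsTorsionFree R M] {P Q : Submodule R M} {a : R}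
    (ha : a ≠ 0) (h : P ≤ Q.comap (a • LinearMap.id)) : Module.rank R P ≤ Module.rank R Q :=
  LinearMap.rank_le_of_injective ((a • LinearMap.id).restrict h) fun _ _ hxy =>
    Subtype.ext (smul_right_injective M ha (congrArg Subtype.val hxy))

theorem Submodule.exists_natCast_smul_mem_of_finite_quotient {R M : Type*} [Ring R]
    [AddCommGroup M] [Module R M] (N : Submodule R M) [Finite (M ⧸ N)] :
    ∃ n : ℕ, n ≠ 0 ∧ ∀ u, (n : R) • u ∈ N := by
  refine ⟨Nat.card (M ⧸ N), Nat.card_pos.ne', fun u => ?_⟩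
  rw [Nat.cast_smul_eq_nsmul, ← Submodule.Quotient.mk_eq_zero, Submodule.Quotient.mk_smul]
  exact card_nsmul_eq_zero'

theorem LinearMap.exists_comp_eq_smul_id {R M N : Type*} [CommRing R] [AddCommGroup M]
    [Module R M] [AddCommGroup N] [Module R N] {i : M →ₗ[R] N} (hi : Function.Injective i)
    {a : R} (ha : ∀ v, a • v ∈ LinearMap.range i) :
    ∃ w : N →ₗ[R] M, w ∘ₗ i = a • LinearMap.id := by
  refine ⟨(LinearEquiv.ofInjective i hi).symm ∘ₗ (a • LinearMap.id).codRestrict _ ha, ?_⟩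
  ext k
  simp only [LinearMap.comp_apply, LinearEquiv.coe_coe, LinearEquiv.symm_apply_eq]
  ext
  simp

open TensorProduct in
/-- `L_A ⊆ H_A` and `L_B ⊆ H_B` are presented as the injective maps `iA`, `iB` with finite
cokernels, `Φ'` is the restriction of `Φ`, and `M`, `M'` are `MC(Φ; H_A, H_B)` and
`MC(Φ; L_A, L_B)`. -/
theorem matrix_coefficient_module_commensurable_of_finite_index_general
    (HA HB KA KB : Type) [AddCommGroup HA] [AddCommGroup HB] [Module ℤ HA] [Module ℤ HB]
    [AddCommGroup KA] [AddCommGroup KB] [Module ℤ KA] [Module ℤ KB]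
    [Module.Free ℤ HB] [Module.Finite ℤ HB]
    (Φ : (ZHat ⊗[ℤ] HA) →ₗ[ZHat] (ZHat ⊗[ℤ] HB))
    (iA : KA →ₗ[ℤ] HA) (iB : KB →ₗ[ℤ] HB)
    (hiB : Function.Injective iB)
    (hfinA : Finite (HA ⧸ LinearMap.range iA)) (hfinB : Finite (HB ⧸ LinearMap.range iB))
    (Φ' : (ZHat ⊗[ℤ] KA) →ₗ[ZHat] (ZHat ⊗[ℤ] KB))
    (hrestr : (LinearMap.baseChange ZHat iB).comp Φ' =
      Φ.comp (LinearMap.baseChange ZHat iA))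
    (M M' : Submodule ℤ ZHat)
    (hM : IsLeast {L : Submodule ℤ ZHat |
        ∀ u : HA, Φ ((1 : ZHat) ⊗ₜ[ℤ] u) ∈
          LinearMap.range (TensorProduct.map L.subtype (LinearMap.id : HB →ₗ[ℤ] HB))} M)
    (hM' : IsLeast {L : Submodule ℤ ZHat |
        ∀ u : KA, Φ' ((1 : ZHat) ⊗ₜ[ℤ] u) ∈
          LinearMap.range (TensorProduct.map L.subtype (LinearMap.id : KB →ₗ[ℤ] KB))} M') :
    (∃ a : ℤ, a ≠ 0 ∧ ∀ x ∈ M, a • x ∈ M') ∧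
    (∃ b : ℤ, b ≠ 0 ∧ ∀ x ∈ M', b • x ∈ M) ∧
    Module.rank ℤ M' = Module.rank ℤ M := by
  obtain ⟨nA, hnA, ha⟩ := (LinearMap.range iA).exists_natCast_smul_mem_of_finite_quotient
  obtain ⟨nB, hnB, hb⟩ := (LinearMap.range iB).exists_natCast_smul_mem_of_finite_quotient
  have ha0 : (nA : ℤ) ≠ 0 := Nat.cast_ne_zero.mpr hnA
  have hb0 : (nB : ℤ) ≠ 0 := Nat.cast_ne_zero.mpr hnB
  obtain ⟨w, hw⟩ := LinearMap.exists_comp_eq_smul_id hiB hb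
  have : Module.Finite ℤ KB := .of_injective iB hiB
  have : Module.IsTorsionFree ℤ KB := hiB.moduleIsTorsionFree iB iB.map_smul
  have hMM' : M ≤ M'.comap ((nA : ℤ) • LinearMap.id) :=
    hM.2 (HasMatrixCoeffsIn.comap_smul_of_restrict hrestr ha hM'.1)
  have hM'M : M' ≤ M.comap ((nB : ℤ) • LinearMap.id) :=
    hM'.2 (HasMatrixCoeffsIn.restrict_comap_smul hrestr hw hM.1)
  exact ⟨⟨nA, ha0, fun _ hx => hMM' hx⟩, ⟨nB, hb0, fun _ hx => hM'M hx⟩,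
    le_antisymm (Submodule.rank_le_of_le_comap_smul hb0 hM'M)
      (Submodule.rank_le_of_le_comap_smul ha0 hMM')⟩

set_option synthInstance.maxHeartbeats 1000000 in
set_option maxHeartbeats 1000000 in
open TensorProduct in
/-- For finite-index `ℤ`-submodules `L_A ⊆ H_A`, `L_B ⊆ H_B`
(presented as injective maps `iA : KA → H_A`, `iB : KB → H_B` with finite cokernels)
such that `Φ(L_A ⊗ ẑ) ⊆ L_B ⊗ ẑ` (witnessed by the restricted map `Φ'`), the matrix
coefficient module of the restriction is commensurable with that of `Φ`, and they have
equal `ℤ`-rank.  The matrix coefficient modules are the least submodules `M`, `M'`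
satisfying their defining property. -/
theorem matrix_coefficient_module_commensurable_of_finite_index
    (HA HB KA KB : Type) [AddCommGroup HA] [AddCommGroup HB] [Module ℤ HA] [Module ℤ HB]
    [AddCommGroup KA] [AddCommGroup KB] [Module ℤ KA] [Module ℤ KB]
    [Module.Free ℤ HA] [Module.Finite ℤ HA] [Module.Free ℤ HB] [Module.Finite ℤ HB]
    (Φ : (ZHat ⊗[ℤ] HA) →ₗ[ZHat] (ZHat ⊗[ℤ] HB))
    (iA : KA →ₗ[ℤ] HA) (iB : KB →ₗ[ℤ] HB)
    (hiA : Function.Injective iA) (hiB : Function.Injective iB)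
    (hfinA : Finite (HA ⧸ LinearMap.range iA)) (hfinB : Finite (HB ⧸ LinearMap.range iB))
    (Φ' : (ZHat ⊗[ℤ] KA) →ₗ[ZHat] (ZHat ⊗[ℤ] KB))
    (hrestr : (LinearMap.baseChange ZHat iB).comp Φ' =
      Φ.comp (LinearMap.baseChange ZHat iA))
    (M M' : Submodule ℤ ZHat)
    (hM : IsLeast {L : Submodule ℤ ZHat |
        ∀ u : HA, Φ ((1 : ZHat) ⊗ₜ[ℤ] u) ∈
          LinearMap.range (TensorProduct.map L.subtype (LinearMap.id : HB →ₗ[ℤ] HB))} M)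
    (hM' : IsLeast {L : Submodule ℤ ZHat |
        ∀ u : KA, Φ' ((1 : ZHat) ⊗ₜ[ℤ] u) ∈
          LinearMap.range (TensorProduct.map L.subtype (LinearMap.id : KB →ₗ[ℤ] KB))} M') :
    (∃ a : ℤ, a ≠ 0 ∧ ∀ x ∈ M, a • x ∈ M') ∧
    (∃ b : ℤ, b ≠ 0 ∧ ∀ x ∈ M', b • x ∈ M) ∧
    Module.rank ℤ M' = Module.rank ℤ M :=
  matrix_coefficient_module_commensurable_of_finite_index_general HA HB KA KB Φ iA iB hiB hfinA
    hfinB Φ' hrestr M M' hM hM'
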